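/- arXiv:0902.0411 — 3 statements merged into one kernel-verified Lean document; each statement's English description precedes it below -/
import Mathlib

section
/- Let E be a finite linearly ordered set and I an irreflexive symmetric relation on E, and let {*} be the one-point pointed M(E,I)-set (so *·e = * for all e ∈ E). Then every differential of the chain complex A({*}) is the zero homomorphism, and consequently H_s(A({*})) ≅ ℤ^{p_s} for every s ≥ 0, where p_s is the number of s-cliques. (This computes the homology of the free partially commutative monoid M(E,I) with constant coefficients ℤ.) -/
/-!
Common setup: free partially commutative monoid `M(E,I)` data, cliques of the
commutation relation, the augmented clique chain complex `K(E,I)`, the chain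
complexes `A(X^•)` and `B(X^•)` of a pointed `M(E,I)`-set, and their homology.

A pointed `M(E,I)`-set with underlying non-base part `X` is modelled as an
action `act : Option X → E → Option X`, where `none` is the base point `*`.
-/

namespace PCMHomology

variable {E : Type*} [LinearOrder E] [Fintype E]

/-- `S` is a clique for the relation `I`: distinct elements pairwise satisfy `I`. -/
def IsClique (I : E → E → Prop) (S : Finset E) : Prop :=
  ∀ a ∈ S, ∀ b ∈ S, a ≠ b → I a b

/-- The type of `s`-cliques: `s`-element subsets of `E` whose elements pairwise
commute (satisfy `I`). -/
def Clique (I : E → E → Prop) (s : ℕ) : Type _ :=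
  {S : Finset E // S.card = s ∧ IsClique I S}

/-- `p_s`, the number of `s`-cliques. -/
noncomputable def pClique (I : E → E → Prop) (s : ℕ) : ℕ :=
  Nat.card (Clique I s)

/-- Removing an element of an `(s+1)`-clique yields an `s`-clique. -/
def faceClique {I : E → E → Prop} {s : ℕ} (S : Clique I (s + 1))
    (e : {a // a ∈ S.val}) : Clique I s :=
  ⟨S.val.erase e.val, by
    refine ⟨?_, ?_⟩
    · rw [Finset.card_erase_of_mem e.property, S.property.1]; rfl
    · intro a ha b hb hab
      exact S.property.2 a (Finset.mem_of_mem_erase ha) b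
        (Finset.mem_of_mem_erase hb) hab⟩

/-- If `e` is the `k`-th element of the clique `S = {e_1 < ⋯ < e_{s+1}}` then
`posIdx S e = k - 1`, the number of elements of `S` smaller than `e`. -/
def posIdx {I : E → E → Prop} {s : ℕ} (S : Clique I (s + 1))
    (e : {a // a ∈ S.val}) : ℕ :=
  (S.val.filter (fun a => a < e.val)).card

/-- Degree-`s` component of the augmented clique chain complex `K(E,I)`:
the free abelian group on the `s`-cliques. -/
abbrev KC (I : E → E → Prop) (s : ℕ) : Type _ := Clique I s →₀ ℤ

/-- The differential of `K(E,I)`: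
`d (e_1,…,e_{s+1}) = ∑ (-1)^(k+1) (e_1,…,ê_k,…,e_{s+1})`. -/
noncomputable def Kd (I : E → E → Prop) (s : ℕ) : KC I (s + 1) →+ KC I s :=
  Finsupp.liftAddHom fun S => zmultiplesHom _
    (∑ e ∈ S.val.attach,
      ((-1 : ℤ) ^ posIdx S e) • Finsupp.single (faceClique S e) (1 : ℤ))

/-- Degree-`s` component of the chain complex `A(X^•)`: the free abelian group
on pairs `(x, S)` with `x ∈ X^•` (including the base point `* = none`) and `S`
an `s`-clique. -/
abbrev AC (I : E → E → Prop) (X : Type*) (s : ℕ) : Type _ :=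
  (Option X × Clique I s) →₀ ℤ

/-- The differential of `A(X^•)`:
`d (x; e_1,…,e_{s+1}) = ∑ (-1)^k ((x·e_k; …ê_k…) - (x; …ê_k…))`. -/
noncomputable def Ad (I : E → E → Prop) {X : Type*}
    (act : Option X → E → Option X) (s : ℕ) : AC I X (s + 1) →+ AC I X s :=
  Finsupp.liftAddHom fun p => zmultiplesHom _
    (∑ e ∈ p.2.val.attach, ((-1 : ℤ) ^ (posIdx p.2 e + 1)) •
      (Finsupp.single (act p.1 e.val, faceClique p.2 e) (1 : ℤ)
        - Finsupp.single (p.1, faceClique p.2 e) (1 : ℤ)))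

/-- Degree-`s` component of the chain complex `B(X^•)`: the free abelian group
on pairs `(x, S)` with `x ∈ X` (so `x ≠ *`) and `S` an `s`-clique. -/
abbrev BC (I : E → E → Prop) (X : Type*) (s : ℕ) : Type _ :=
  (X × Clique I s) →₀ ℤ

/-- The generator `(x·e; T)` of `B(X^•)`, interpreted as `0` when `x·e = *`. -/
noncomputable def bGen {I : E → E → Prop} {X : Type*} {s : ℕ} (o : Option X) (T : Clique I s) :
    BC I X s :=
  o.elim 0 (fun y => Finsupp.single (y, T) (1 : ℤ))

/-- The differential of `B(X^•)`:
`d (x; e_1,…,e_{s+1}) = ∑ (-1)^k ((x·e_k; …ê_k…) - (x; …ê_k…))`, with a term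
`(x·e_k; T)` interpreted as `0` when `x·e_k = *`. -/
noncomputable def Bd (I : E → E → Prop) {X : Type*}
    (act : Option X → E → Option X) (s : ℕ) : BC I X (s + 1) →+ BC I X s :=
  Finsupp.liftAddHom fun p => zmultiplesHom _
    (∑ e ∈ p.2.val.attach, ((-1 : ℤ) ^ (posIdx p.2 e + 1)) •
      (bGen (act (some p.1) e.val) (faceClique p.2 e)
        - Finsupp.single (p.1, faceClique p.2 e) (1 : ℤ)))

/-- Homology at `C1` of `C2 -d2→ C1 -d1→ C0`: the kernel of `d1` modulo (its
intersection with) the image of `d2`. -/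
abbrev homologyOf {C2 C1 C0 : Type*} [AddCommGroup C2] [AddCommGroup C1]
    [AddCommGroup C0] (d1 : C1 →+ C0) (d2 : C2 →+ C1) : Type _ :=
  d1.ker ⧸ ((d2.range).addSubgroupOf d1.ker)

/-- The homology groups of a nonnegatively graded chain complex `(C, d)`;
in degree `0` this is `C 0 / im (d 0)`. -/
def Hmlgy (C : ℕ → Type*) [∀ n, AddCommGroup (C n)]
    (d : ∀ n, C (n + 1) →+ C n) : ℕ → Type _
  | 0 => homologyOf (0 : C 0 →+ PUnit.{1}) (d 0)
  | (s + 1) => homologyOf (d s) (d (s + 1))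

instance hmlgyAddCommGroup (C : ℕ → Type*) [∀ n, AddCommGroup (C n)]
    (d : ∀ n, C (n + 1) →+ C n) : ∀ s, AddCommGroup (Hmlgy C d s)
  | 0 => inferInstanceAs (AddCommGroup (homologyOf (0 : C 0 →+ PUnit.{1}) (d 0)))
  | (s + 1) => inferInstanceAs (AddCommGroup (homologyOf (d s) (d (s + 1))))

end PCMHomology

/-
Since `X^• = {*}` is a single point, `x·e = x` for every generator, so both terms of every
summand of the differential of `A({*})` coincide. A complex with zero differentials is its own
homology, and `A_s({*})` is free on the `s`-cliques.
-/

namespace PCMHomology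

section ZeroDifferentials

variable {C2 C1 C0 : Type*} [AddCommGroup C2] [AddCommGroup C1] [AddCommGroup C0]

noncomputable def homologyOfZeroAddEquiv : homologyOf (0 : C1 →+ C0) (0 : C2 →+ C1) ≃+ C1 :=
  (QuotientAddGroup.quotientAddEquivOfEq (by
      rw [AddMonoidHom.range_zero, AddSubgroup.bot_addSubgroupOf])).trans <|
    QuotientAddGroup.quotientBot.trans <|
      (AddEquiv.addSubgroupCongr AddMonoidHom.ker_zero).trans AddSubgroup.topEquiv

noncomputable def hmlgyAddEquivOfEqZero (C : ℕ → Type*) [∀ n, AddCommGroup (C n)]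
    (d : ∀ n, C (n + 1) →+ C n) (hd : ∀ n, d n = 0) : ∀ s, Hmlgy C d s ≃+ C s
  | 0 => by
    change homologyOf (0 : C 0 →+ PUnit.{1}) (d 0) ≃+ C 0
    exact hd 0 ▸ homologyOfZeroAddEquiv
  | s + 1 => by
    change homologyOf (d s) (d (s + 1)) ≃+ C (s + 1)
    exact hd s ▸ hd (s + 1) ▸ homologyOfZeroAddEquiv

end ZeroDifferentials

section Cliques

variable {E : Type*} [LinearOrder E]

instance [Fintype E] (I : E → E → Prop) (s : ℕ) : Finite (Clique I s) :=
  Subtype.finite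

theorem ad_eq_zero_of_forall_act_eq_self (I : E → E → Prop) {X : Type*}
    (act : Option X → E → Option X) (hact : ∀ x e, act x e = x) (s : ℕ) :
    Ad I act s = 0 :=
  Finsupp.addHom_ext fun p n => by simp [Ad, hact]

noncomputable def acAddEquivOfIsEmpty [Fintype E] (I : E → E → Prop) (X : Type*) [IsEmpty X]
    (s : ℕ) :
    AC I X s ≃+ (Fin (pClique I s) → ℤ) :=
  (Finsupp.domCongr ((Equiv.uniqueProd _ (Option X)).trans (Finite.equivFin _))).trans
    Finsupp.addEquivFunOnFinite

end Cliques

theorem stmt2_general {E : Type*} [LinearOrder E] [Fintype E]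
    (I : E → E → Prop)
    (act : Option Empty → E → Option Empty) :
    (∀ s : ℕ, Ad I act s = 0) ∧
    (∀ s : ℕ, Nonempty
      (Hmlgy (AC I Empty) (Ad I act) s ≃+ (Fin (pClique I s) → ℤ))) := by
  have hAd : ∀ s, Ad I act s = 0 :=
    ad_eq_zero_of_forall_act_eq_self I act fun _ _ => Subsingleton.elim _ _
  exact ⟨hAd, fun s => ⟨(hmlgyAddEquivOfEqZero _ _ hAd s).trans (acAddEquivOfIsEmpty I Empty s)⟩⟩

/-- For the one-point pointed `M(E,I)`-set `{*}` (here
`X = Empty`, so `X^• = Option Empty ≅ {*}`), every differential of `A({*})`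
is zero, and `H_s(A({*})) ≅ ℤ^{p_s}` for every `s ≥ 0`, where `p_s` is the
number of `s`-cliques. -/
theorem stmt2 {E : Type*} [LinearOrder E] [Fintype E]
    (I : E → E → Prop) (hirr : ∀ e, ¬ I e e) (hsym : ∀ e e', I e e' → I e' e)
    (act : Option Empty → E → Option Empty)
    (hstar : ∀ e, act none e = none) :
    (∀ s : ℕ, Ad I act s = 0) ∧
    (∀ s : ℕ, Nonempty
      (Hmlgy (AC I Empty) (Ad I act) s ≃+ (Fin (pClique I s) → ℤ))) :=
  stmt2_general I act

end PCMHomology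
end

section
/- Let E be a finite linearly ordered set, I an irreflexive symmetric relation on E, and X^• any finite pointed M(E,I)-set. Then for every s ≥ 1 there is an isomorphism of abelian groups H_s(A(X^•)) ≅ H_s(B(X^•)) ⊕ ℤ^{p_s}, where p_s is the number of s-cliques. (In the paper's language: lim_s Δℤ ≅ lim_s ℤ[x_0,…,x_n] ⊕ lim_s^{M(E,I)} Δℤ.) -/
namespace PCMHomology

/-!
`A(X^•)` splits, as a chain complex, into `B(X^•)` and the free abelian group on the cliques
with zero differential. The maps are `(x, S) ↦ ((x, S), S)`, where `(*, S)` goes to `(0, S)`,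
and back `((x, S), T) ↦ (x, S) - (*, S) + (*, T)`. They commute with the differentials because
`*` is fixed by every `e`, so `d (*, S) = 0`, and because every term `(x·e, T) - (x, T)` of a
boundary has zero image in the clique part. Homology then splits accordingly.
-/

section Homology

variable {C₂ C₁ C₀ D₂ D₁ D₀ : Type*} [AddCommGroup C₂] [AddCommGroup C₁] [AddCommGroup C₀]
  [AddCommGroup D₂] [AddCommGroup D₁] [AddCommGroup D₀]

noncomputable def homologyOfCongr {f : C₁ →+ C₀} {g : C₂ →+ C₁} {f' : D₁ →+ D₀}
    {g' : D₂ →+ D₁} (e₀ : C₀ ≃+ D₀) (e₁ : C₁ ≃+ D₁) (e₂ : C₂ ≃+ D₂)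
    (hf : ∀ x, e₀ (f x) = f' (e₁ x)) (hg : ∀ x, e₁ (g x) = g' (e₂ x)) :
    homologyOf f g ≃+ homologyOf f' g' :=
  have hker : ∀ x, e₁ x ∈ f'.ker ↔ x ∈ f.ker := fun x => by
    simp only [AddMonoidHom.mem_ker, ← hf, AddEquivClass.map_eq_zero_iff]
  have hrange : ∀ x, e₁ x ∈ g'.range ↔ x ∈ g.range := fun x => by
    refine ⟨fun ⟨y, hy⟩ => ⟨e₂.symm y, e₁.injective ?_⟩, fun ⟨y, hy⟩ => ⟨e₂ y, by rw [← hg, hy]⟩⟩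
    rw [hg, AddEquiv.apply_symm_apply, hy]
  QuotientAddGroup.congr _ _
    { toFun := fun x => ⟨e₁ x, (hker x).2 x.2⟩
      invFun := fun y => ⟨e₁.symm y, (hker _).1 (by simp)⟩
      left_inv := fun x => Subtype.ext (e₁.symm_apply_apply x)
      right_inv := fun y => Subtype.ext (e₁.apply_symm_apply y)
      map_add' := fun x y => Subtype.ext (map_add e₁ (x : C₁) y) }
    (by
      ext ⟨y, hy⟩
      obtain ⟨x, rfl⟩ := e₁.surjective y
      simp only [AddSubgroup.mem_map, AddSubgroup.mem_addSubgroupOf, hrange]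
      refine ⟨fun ⟨z, hz, hze⟩ => ?_, fun hx => ⟨⟨x, (hker x).1 hy⟩, hx, rfl⟩⟩
      rwa [← e₁.injective (congrArg Subtype.val hze)])

variable {M₂ M₁ M₀ : Type*} [AddCommGroup M₂] [AddCommGroup M₁] [AddCommGroup M₀]

noncomputable def homologyOfProdMapZeroEquiv (f : C₁ →+ C₀) (g : C₂ →+ C₁) :
    homologyOf (f.prodMap (0 : M₁ →+ M₀)) (g.prodMap (0 : M₂ →+ M₁)) ≃+
      homologyOf f g × M₁ :=
  let K := (f.prodMap (0 : M₁ →+ M₀)).ker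
  have hK : ∀ x : C₁ × M₁, x ∈ K ↔ x.1 ∈ f.ker := fun x => by
    simp [K, Prod.ext_iff]
  let φ : K →+ homologyOf f g × M₁ :=
    { toFun := fun x => (QuotientAddGroup.mk ⟨x.1.1, (hK x).1 x.2⟩, x.1.2)
      map_zero' := rfl
      map_add' := fun _ _ => rfl }
  have hφ : Function.Surjective φ := by
    rintro ⟨c, m⟩
    obtain ⟨⟨x, hx⟩, rfl⟩ := QuotientAddGroup.mk'_surjective _ c
    exact ⟨⟨(x, m), (hK (x, m)).2 hx⟩, rfl⟩
  have hker : φ.ker = ((g.prodMap (0 : M₂ →+ M₁)).range).addSubgroupOf K := by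
    ext ⟨⟨x, m⟩, hx⟩
    rw [AddMonoidHom.mem_ker, AddSubgroup.mem_addSubgroupOf, AddMonoidHom.range_prodMap,
      AddMonoidHom.range_zero, AddSubgroup.mem_prod, Prod.ext_iff]
    exact and_congr ((QuotientAddGroup.eq_zero_iff _).trans AddSubgroup.mem_addSubgroupOf)
      AddSubgroup.mem_bot.symm
  (QuotientAddGroup.quotientAddEquivOfEq hker.symm).trans
    (QuotientAddGroup.quotientKerEquivOfSurjective φ hφ)

end Homology

section Splitting

variable {E : Type*} (I : E → E → Prop) (X : Type*)

noncomputable def acToBC (s : ℕ) : AC I X s →+ BC I X s :=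
  Finsupp.liftAddHom fun p => zmultiplesHom _ (bGen p.1 p.2)

noncomputable def acToKC (s : ℕ) : AC I X s →+ KC I s :=
  Finsupp.mapDomain.addMonoidHom Prod.snd

noncomputable def bcToAC (s : ℕ) : BC I X s →+ AC I X s :=
  Finsupp.mapDomain.addMonoidHom (fun p => (some p.1, p.2)) -
    Finsupp.mapDomain.addMonoidHom (fun p => (none, p.2))

noncomputable def kcToAC (s : ℕ) : KC I s →+ AC I X s :=
  Finsupp.mapDomain.addMonoidHom (Prod.mk none)

variable {I X}

@[simp] theorem acToBC_single {s : ℕ} (p : Option X × Clique I s) (n : ℤ) :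
    acToBC I X s (Finsupp.single p n) = n • bGen p.1 p.2 := by
  simp [acToBC]

@[simp] theorem acToKC_single {s : ℕ} (p : Option X × Clique I s) (n : ℤ) :
    acToKC I X s (Finsupp.single p n) = Finsupp.single p.2 n := by
  simp [acToKC]

@[simp] theorem bcToAC_single {s : ℕ} (p : X × Clique I s) (n : ℤ) :
    bcToAC I X s (Finsupp.single p n) =
      Finsupp.single (some p.1, p.2) n - Finsupp.single (none, p.2) n := by
  simp [bcToAC]

@[simp] theorem kcToAC_single {s : ℕ} (S : Clique I s) (n : ℤ) :
    kcToAC I X s (Finsupp.single S n) = Finsupp.single (none, S) n := by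
  simp [kcToAC]

@[simp] theorem bGen_none {s : ℕ} (T : Clique I s) : bGen (none : Option X) T = 0 := rfl

@[simp] theorem bGen_some {s : ℕ} (x : X) (T : Clique I s) :
    bGen (some x) T = Finsupp.single (x, T) 1 := rfl

variable (I X) in
noncomputable def acSplitEquiv (s : ℕ) : AC I X s ≃+ BC I X s × KC I s :=
  AddMonoidHom.toAddEquiv ((acToBC I X s).prod (acToKC I X s))
    ((bcToAC I X s).coprod (kcToAC I X s))
    (by
      ext ⟨_ | x, S⟩ : 2 <;> simp)
    (by
      rw [AddMonoidHom.comp_coprod, ← AddMonoidHom.coprod_inl_inr]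
      congr 1 <;> ext <;> simp)

theorem acSplitEquiv_Ad [LinearOrder E] {act : Option X → E → Option X}
    (hstar : ∀ e, act none e = none) (s : ℕ) (x : AC I X (s + 1)) :
    acSplitEquiv I X s (Ad I act s x) =
      (Bd I act s).prodMap 0 (acSplitEquiv I X (s + 1) x) := by
  suffices h : (acSplitEquiv I X s).toAddMonoidHom.comp (Ad I act s) =
      ((Bd I act s).prodMap 0).comp (acSplitEquiv I X (s + 1)).toAddMonoidHom from
    DFunLike.congr_fun h x
  ext ⟨_ | x, S⟩ : 2 <;> apply Prod.ext <;>
    simp [acSplitEquiv, Ad, Bd, hstar, Prod.fst_sum, Prod.snd_sum]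

end Splitting

instance Clique.instFinite {E : Type*} (I : E → E → Prop) [Finite E] (s : ℕ) :
    Finite (Clique I s) :=
  Subtype.finite

theorem stmt4_general {E : Type*} [LinearOrder E] [Fintype E]
    (I : E → E → Prop)
    (X : Type*)
    (act : Option X → E → Option X)
    (hstar : ∀ e, act none e = none) :
    ∀ s : ℕ, 1 ≤ s → Nonempty
      (Hmlgy (AC I X) (Ad I act) s ≃+
        (Hmlgy (BC I X) (Bd I act) s) × (Fin (pClique I s) → ℤ)) := by
  rintro (_ | t) ht
  · exact absurd ht (by decide)
  exact ⟨(homologyOfCongr (acSplitEquiv I X t) (acSplitEquiv I X (t + 1))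
      (acSplitEquiv I X (t + 2)) (acSplitEquiv_Ad hstar t) (acSplitEquiv_Ad hstar (t + 1))).trans
    ((homologyOfProdMapZeroEquiv _ _).trans
      (AddEquiv.prodCongr (AddEquiv.refl _)
        ((Finsupp.domCongr (Finite.equivFin _)).trans Finsupp.addEquivFunOnFinite)))⟩

/-- For any finite pointed `M(E,I)`-set `X^•` and every
`s ≥ 1`, `H_s(A(X^•)) ≅ H_s(B(X^•)) ⊕ ℤ^{p_s}`, where `p_s` is the number of
`s`-cliques. -/
theorem stmt4 {E : Type*} [LinearOrder E] [Fintype E]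
    (I : E → E → Prop) (hirr : ∀ e, ¬ I e e) (hsym : ∀ e e', I e e' → I e' e)
    (X : Type*) [Finite X]
    (act : Option X → E → Option X)
    (hstar : ∀ e, act none e = none)
    (hcomm : ∀ o e e', I e e' → act (act o e) e' = act (act o e') e) :
    ∀ s : ℕ, 1 ≤ s → Nonempty
      (Hmlgy (AC I X) (Ad I act) s ≃+
        (Hmlgy (BC I X) (Bd I act) s) × (Fin (pClique I s) → ℤ)) :=
  stmt4_general I X act hstar

end PCMHomology
end

section
/- Let E be a finite nonempty linearly ordered set, I an irreflexive symmetric relation on E, and X^• a finite pointed M(E,I)-set such that the action is full and satisfies the rooted-tree condition. Then the integer one-dimensional homology group H_1(A(X^•)) is a torsion-free abelian group. -/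
/-!
The 1-boundaries of `A(X^•)` are exactly the kernel of a homomorphism to a free abelian group,
so `H₁` embeds into a torsion-free group. The homomorphism sends `(x; e)` to the pair of `e`
and `(x, [e])`, where `[e]` is the connected component of `e` in the commutation graph; it kills
`d(x; a, b) = (x; b) - (x; a) - (x·a; b) + (x·b; a)` because the action is full and `I a b`.
Conversely, when `I a b`, the telescoping sum of the `d(y; a, b)` along the path from `x` to `*`
in the rooted tree is the box `(x; b) - (x; a) - (*; b) + (*; a)`. Boxes compose along paths
in the commutation graph, and a chain with trivial invariant is a sum of such boxes.
-/

lemma Finset.sum_attach_of_eq_pair {α M : Type*} [DecidableEq α] [AddCommMonoid M]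
    {s : Finset α} {a b : α} (hab : a ≠ b) (hs : s = {a, b}) (f : s → M) :
    ∑ e ∈ s.attach, f e = f ⟨a, by simp [hs]⟩ + f ⟨b, by simp [hs]⟩ := by
  subst hs
  rw [Finset.attach_insert, Finset.sum_insert (by simp [hab.symm]), Finset.sum_image]
  · congr 1
    exact Finset.sum_eq_single_of_mem _ (Finset.mem_attach _ ⟨b, Finset.mem_singleton_self b⟩)
      fun x _ hx => absurd (Subtype.ext (Finset.mem_singleton.mp x.2)) hx
  · intro x _ y _ hxy
    exact Subtype.ext (by simpa using hxy)

namespace PCMHomology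

theorem isAddTorsionFree_homologyOf {C2 C1 C0 T : Type*} [AddCommGroup C2] [AddCommGroup C1]
    [AddCommGroup C0] [AddCommGroup T] [IsAddTorsionFree T] {d1 : C1 →+ C0} {d2 : C2 →+ C1}
    (ψ : C1 →+ T) (h : d2.range = ψ.ker) : IsAddTorsionFree (homologyOf d1 d2) := by
  refine Function.Injective.isAddTorsionFree
    (QuotientAddGroup.lift _ (ψ.comp d1.ker.subtype) fun z hz => ?_) ?_
  · rwa [AddSubgroup.mem_addSubgroupOf, h] at hz
  · rw [injective_iff_map_eq_zero]
    intro x hx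
    induction x using QuotientAddGroup.induction_on with | H z =>
    rwa [QuotientAddGroup.eq_zero_iff, AddSubgroup.mem_addSubgroupOf, h]

variable {E : Type*} {I : E → E → Prop} {X : Type*}

def Clique.single (e : E) : Clique I 1 :=
  ⟨{e}, Finset.card_singleton e, by simp +contextual [IsClique]⟩

noncomputable def box (o : Option X) (a b : E) : AC I X 1 :=
  Finsupp.single (o, Clique.single b) 1 - Finsupp.single (o, Clique.single a) 1
    - Finsupp.single (none, Clique.single b) 1 + Finsupp.single (none, Clique.single a) 1

lemma box_none (a b : E) : box (I := I) (none : Option X) a b = 0 := by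
  simp [box]

lemma box_self (o : Option X) (a : E) : box (I := I) o a a = 0 := by
  simp [box]

lemma box_swap (o : Option X) (a b : E) : box (I := I) o a b = -box o b a := by
  simp only [box]; abel

lemma box_add_box (o : Option X) (a b c : E) :
    box (I := I) o a b + box o b c = box o a c := by
  simp only [box]; abel

variable [LinearOrder E]

namespace Clique

def elt (S : Clique I 1) : E :=
  S.val.min' (Finset.card_pos.mp (by rw [S.2.1]; norm_num))

@[simp]
lemma elt_single (e : E) : (single e : Clique I 1).elt = e := by
  simp [elt, single]

lemma single_elt (S : Clique I 1) : single S.elt = S := by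
  obtain ⟨a, ha⟩ := Finset.card_eq_one.mp S.2.1
  have h : S.elt ∈ S.val := Finset.min'_mem _ _
  rw [ha, Finset.mem_singleton] at h
  exact Subtype.ext (by rw [ha, ← h]; rfl)

def pair (a b : E) (hab : a < b) (h : I a b) (h' : I b a) : Clique I 2 :=
  ⟨{a, b}, Finset.card_pair hab.ne, by
    simp only [IsClique, Finset.mem_insert, Finset.mem_singleton]
    rintro x (rfl | rfl) y (rfl | rfl) hxy <;> first | exact absurd rfl hxy | assumption⟩

lemma exists_eq_pair (S : Clique I 2) :
    ∃ a b, ∃ (hab : a < b) (h : I a b) (h' : I b a), S = pair a b hab h h' := by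
  obtain ⟨a, b, hne, hval⟩ := Finset.card_eq_two.mp S.2.1
  have hab : I a b := S.2.2 a (by simp [hval]) b (by simp [hval]) hne
  have hba : I b a := S.2.2 b (by simp [hval]) a (by simp [hval]) hne.symm
  rcases hne.lt_or_gt with h | h
  · exact ⟨a, b, h, hab, hba, Subtype.ext hval⟩
  · exact ⟨b, a, h, hba, hab, Subtype.ext (hval.trans (Finset.pair_comm a b))⟩

end Clique

section Pair

variable {a b : E} (hab : a < b) (h : I a b) (h' : I b a)

lemma posIdx_pair_left : posIdx (Clique.pair a b hab h h') ⟨a, by simp [Clique.pair]⟩ = 0 := by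
  simp [posIdx, Clique.pair, Finset.filter_insert, hab.le]

lemma posIdx_pair_right : posIdx (Clique.pair a b hab h h') ⟨b, by simp [Clique.pair]⟩ = 1 := by
  simp [posIdx, Clique.pair, Finset.filter_insert, Finset.filter_singleton, hab]

lemma faceClique_pair_left :
    faceClique (Clique.pair a b hab h h') ⟨a, by simp [Clique.pair]⟩ = Clique.single b :=
  Subtype.ext (Finset.erase_insert (by simp [hab.ne]))

lemma faceClique_pair_right :
    faceClique (Clique.pair a b hab h h') ⟨b, by simp [Clique.pair]⟩ = Clique.single a :=
  Subtype.ext (by simp [faceClique, Clique.pair, Clique.single, Finset.erase_insert_of_ne hab.ne])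

lemma Ad_single_pair (act : Option X → E → Option X) (o : Option X) :
    Ad I act 1 (Finsupp.single (o, Clique.pair a b hab h h') 1) =
      Finsupp.single (o, Clique.single b) 1 - Finsupp.single (o, Clique.single a) 1
        - Finsupp.single (act o a, Clique.single b) 1
        + Finsupp.single (act o b, Clique.single a) 1 := by
  rw [Ad, Finsupp.liftAddHom_apply_single, zmultiplesHom_apply, one_smul]
  dsimp only
  rw [Finset.sum_attach_of_eq_pair (s := (Clique.pair a b hab h h').val) hab.ne rfl,
    posIdx_pair_left, posIdx_pair_right, faceClique_pair_left, faceClique_pair_right]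
  simp only [zero_add, pow_one, Int.reduceNeg, one_add_one_eq_two, neg_one_sq, neg_smul, one_smul]
  abel

end Pair

variable (I X) in
noncomputable def chainInvariant : AC I X 1 →+ (E →₀ ℤ) × (Option X × Quot I →₀ ℤ) :=
  (Finsupp.mapDomain.addMonoidHom fun p => p.2.elt).prod
    (Finsupp.mapDomain.addMonoidHom fun p => (p.1, Quot.mk I p.2.elt))

lemma chainInvariant_single (p : Option X × Clique I 1) :
    chainInvariant I X (Finsupp.single p 1) =
      (Finsupp.single p.2.elt 1, Finsupp.single (p.1, Quot.mk I p.2.elt) 1) := by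
  simp [chainInvariant]

lemma chainInvariant_comp_Ad {act : Option X → E → Option X}
    (hfull : ∀ o e e', act o e = act o e') : (chainInvariant I X).comp (Ad I act 1) = 0 := by
  ext ⟨o, S⟩ : 2
  obtain ⟨a, b, hab, h, h', rfl⟩ := S.exists_eq_pair
  simp only [AddMonoidHom.comp_apply, AddMonoidHom.zero_comp, AddMonoidHom.zero_apply,
    Finsupp.singleAddHom_apply]
  rw [Ad_single_pair]
  simp only [map_add, map_sub, chainInvariant_single, Clique.elt_single, hfull o a b, Quot.sound h]
  simp

variable (I X) in
/-- Uses a chosen representative `(Quot.mk I e).out` of each component, so that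
`z - normalForm I X (chainInvariant I X z)` is a sum of boxes. -/
noncomputable def normalForm : (E →₀ ℤ) × (Option X × Quot I →₀ ℤ) →+ AC I X 1 :=
  AddMonoidHom.coprod
    (Finsupp.mapDomain.addMonoidHom (fun e => (none, Clique.single e)) -
      Finsupp.mapDomain.addMonoidHom fun e => (none, Clique.single (Quot.mk I e).out))
    (Finsupp.mapDomain.addMonoidHom fun p => (p.1, Clique.single p.2.out))

section Tree

variable {act : Option X → E → Option X} {e0 : E}

lemma box_mem_range_of_lt (hfull : ∀ o e e', act o e = act o e')
    (htree : ∀ x : X, ∃ k : ℕ, (fun o => act o e0)^[k] (some x) = none)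
    {a b : E} (hab : a < b) (h : I a b) (h' : I b a) (o : Option X) :
    box o a b ∈ (Ad I act 1).range := by
  obtain ⟨k, hk⟩ : ∃ k : ℕ, (fun o => act o e0)^[k] o = none := by
    cases o with
    | none => exact ⟨0, rfl⟩
    | some x => exact htree x
  induction k generalizing o with
  | zero =>
    obtain rfl : o = none := hk
    rw [box_none]
    exact zero_mem _
  | succ k ih =>
    have hstep : box o a b = Ad I act 1 (Finsupp.single (o, Clique.pair a b hab h h') 1)
        + box (act o e0) a b := by
      rw [Ad_single_pair, hfull o a e0, hfull o b e0, box, box]; abel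
    rw [hstep]
    exact add_mem ⟨_, rfl⟩ (ih _ hk)

lemma box_mem_range (hsym : ∀ e e', I e e' → I e' e) (hfull : ∀ o e e', act o e = act o e')
    (htree : ∀ x : X, ∃ k : ℕ, (fun o => act o e0)^[k] (some x) = none)
    {a b : E} (hab : Relation.EqvGen I a b) (o : Option X) :
    box o a b ∈ (Ad I act 1).range := by
  induction hab with
  | rel x y hxy =>
    rcases lt_trichotomy x y with hlt | rfl | hgt
    · exact box_mem_range_of_lt hfull htree hlt hxy (hsym _ _ hxy) o
    · rw [box_self]; exact zero_mem _
    · rw [box_swap]; exact neg_mem (box_mem_range_of_lt hfull htree hgt (hsym _ _ hxy) hxy o)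
  | refl x => rw [box_self]; exact zero_mem _
  | symm x y _ ih => rw [box_swap]; exact neg_mem ih
  | trans x y z _ _ ih₁ ih₂ => rw [← box_add_box o x y z]; exact add_mem ih₁ ih₂

lemma sub_normalForm_mem_range (hsym : ∀ e e', I e e' → I e' e)
    (hfull : ∀ o e e', act o e = act o e')
    (htree : ∀ x : X, ∃ k : ℕ, (fun o => act o e0)^[k] (some x) = none) (z : AC I X 1) :
    z - normalForm I X (chainInvariant I X z) ∈ (Ad I act 1).range := by
  induction z using Finsupp.induction_linear with
  | zero => simp
  | add z w hz hw => rw [map_add, map_add, add_sub_add_comm]; exact add_mem hz hw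
  | single p n =>
    obtain ⟨o, S⟩ := p
    rw [← Finsupp.smul_single_one, map_zsmul, map_zsmul, ← smul_sub]
    refine zsmul_mem ?_ n
    have hbox : Finsupp.single (o, S) 1 - normalForm I X (chainInvariant I X
        (Finsupp.single (o, S) 1)) = box o (Quot.mk I S.elt).out S.elt := by
      rw [chainInvariant_single]
      simp only [normalForm, AddMonoidHom.coprod_apply, AddMonoidHom.sub_apply,
        Finsupp.mapDomain.addMonoidHom_apply, Finsupp.mapDomain_single, Clique.single_elt, box]
      abel
    rw [hbox]
    exact box_mem_range hsym hfull htree (Quot.eqvGen_exact (Quot.out_eq _)) o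

theorem range_Ad_one_eq_ker_chainInvariant (hsym : ∀ e e', I e e' → I e' e)
    (hfull : ∀ o e e', act o e = act o e')
    (htree : ∀ x : X, ∃ k : ℕ, (fun o => act o e0)^[k] (some x) = none) :
    (Ad I act 1).range = (chainInvariant I X).ker := by
  refine le_antisymm ?_ fun z hz => ?_
  · rintro _ ⟨u, rfl⟩
    exact DFunLike.congr_fun (chainInvariant_comp_Ad hfull) u
  · simpa [(chainInvariant I X).mem_ker.mp hz] using sub_normalForm_mem_range hsym hfull htree z

end Tree

end PCMHomology

namespace PCMHomology

theorem stmt9_general {E : Type*} [LinearOrder E]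
    (I : E → E → Prop) (hsym : ∀ e e', I e e' → I e' e)
    (X : Type*)
    (act : Option X → E → Option X)
    (hfull : ∀ o e e', act o e = act o e')
    (e0 : E)
    (htree : ∀ x : X, ∃ k : ℕ, (fun o => act o e0)^[k] (some x) = none) :
    ∀ (x : Hmlgy (AC I X) (Ad I act) 1) (m : ℤ), m • x = 0 → m = 0 ∨ x = 0 := by
  have : IsAddTorsionFree (homologyOf (Ad I act 0) (Ad I act 1)) :=
    isAddTorsionFree_homologyOf _ (range_Ad_one_eq_ker_chainInvariant hsym hfull htree)
  exact fun x m => (smul_eq_zero (M := homologyOf (Ad I act 0) (Ad I act 1))).mp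

/-- Let `X^•` be a finite pointed `M(E,I)`-set with full
action satisfying the rooted-tree condition. Then the integer one-dimensional
homology group `H₁(A(X^•))` is torsion-free. -/
theorem stmt9 {E : Type*} [LinearOrder E] [Fintype E] [Nonempty E]
    (I : E → E → Prop) (hirr : ∀ e, ¬ I e e) (hsym : ∀ e e', I e e' → I e' e)
    (X : Type*) [Finite X]
    (act : Option X → E → Option X)
    (hstar : ∀ e, act none e = none)
    (hcomm : ∀ o e e', I e e' → act (act o e) e' = act (act o e') e)
    (hfull : ∀ o e e', act o e = act o e')
    (e0 : E)
    (htree : ∀ x : X, ∃ k : ℕ, (fun o => act o e0)^[k] (some x) = none) :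
    ∀ (x : Hmlgy (AC I X) (Ad I act) 1) (m : ℤ), m • x = 0 → m = 0 ∨ x = 0 :=
  stmt9_general I hsym X act hfull e0 htree

end PCMHomology
end
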